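/- For every non-negative integer m and every non-negative integer k, Σ_{n=0}^m [(m+1)_n · ⟨m⟩_n · (m+1)_{k+n} · (k+m+2n+1)] / [n! · (k+n)! · (2m+2)_{k+n}] = 2^(2m+1) · Γ(m+3/2) / (√π · (m+k)!). -/

import Mathlib

/-!
Up to the factor `(2m+1)!/m!`, which together with `Γ(m + 3/2) = (2m+1)‼ √π / 2^(m+1)` accounts for
the right-hand side, the summand is the hypergeometric term `F(m, k, n) = wzTerm m k n`, so the
identity says `∑ₙ F(m, k, n) = 1/(m+k)!`. This is proved by the Wilf–Zeilberger method:
`(m+k+1) F(m, k+1, n) - F(m, k, n)` and `(m+1) F(m+1, 0, n) - F(m, 0, n)` are differences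
`G(n+1) - G(n)` of explicit certificates `G`, which vanish at `n = 0` and, through the factor
`⟨m⟩_n` or `⟨m+1⟩_n`, at every large `n`. Summing over `n` gives induction on `k`, with base
case `k = 0` by induction on `m`.
-/
/-- Rising factorial (Pochhammer symbol) `(x)_n`. -/
def risingFac (x : ℝ) (n : ℕ) : ℝ := ∏ i ∈ Finset.range n, (x + i)

/-- Falling factorial `⟨x⟩_n = x(x-1)⋯(x-n+1)`. -/
def fallingFac (x : ℝ) (n : ℕ) : ℝ := ∏ i ∈ Finset.range n, (x - i)

open Finset Nat

lemma risingFac_succ (x : ℝ) (n : ℕ) : risingFac x (n + 1) = risingFac x n * (x + n) :=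
  prod_range_succ _ _

lemma fallingFac_zero (x : ℝ) : fallingFac x 0 = 1 := prod_range_zero _

lemma fallingFac_succ (x : ℝ) (n : ℕ) : fallingFac x (n + 1) = fallingFac x n * (x - n) :=
  prod_range_succ _ _

lemma fallingFac_add_one_succ (x : ℝ) (n : ℕ) :
    fallingFac (x + 1) (n + 1) = (x + 1) * fallingFac x n := by
  rw [fallingFac, prod_range_succ']
  simp only [Nat.cast_add, Nat.cast_one, Nat.cast_zero, sub_zero, add_sub_add_right_eq_sub]
  rw [mul_comm, fallingFac]

lemma fallingFac_natCast_eq_zero_of_lt {m n : ℕ} (h : m < n) : fallingFac m n = 0 :=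
  prod_eq_zero (mem_range.mpr h) (sub_self _)

lemma factorial_mul_risingFac (c n : ℕ) : (c ! : ℝ) * risingFac (c + 1) n = (c + n)! := by
  induction n with
  | zero => simp [risingFac]
  | succ n ih =>
    rw [risingFac_succ, ← mul_assoc, ih, ← add_assoc, factorial_succ]
    push_cast
    ring

theorem mul_sum_range_eq_of_telescoping {R : Type*} [CommRing R] {f g G : ℕ → R} {c : R} {N : ℕ}
    (h : ∀ n, c * g n = f n + (G (n + 1) - G n)) (h₀ : G 0 = 0) (hN : G N = 0) :
    c * ∑ n ∈ range N, g n = ∑ n ∈ range N, f n := by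
  rw [mul_sum, sum_congr rfl fun n _ ↦ h n, sum_add_distrib, sum_range_sub, hN, h₀, sub_zero,
    add_zero]

lemma eq_inv_factorial_succ_of_mul_eq {x : ℝ} {n : ℕ} (h : (n + 1 : ℝ) * x = (n ! : ℝ)⁻¹) :
    x = ((n + 1)! : ℝ)⁻¹ := by
  rw [factorial_succ, Nat.cast_mul, mul_inv, ← h, Nat.cast_add_one,
    inv_mul_cancel_left₀ (by positivity)]

noncomputable def wzTerm (m k n : ℕ) : ℝ :=
  fallingFac m n * (m + n)! * (m + k + n)! * (k + m + 2 * n + 1) /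
    (m ! * n ! * (k + n)! * (2 * m + k + n + 1)!)

noncomputable def wzCertK (m k n : ℕ) : ℝ :=
  n * fallingFac m n * (m + n)! * (m + k + n)! /
    (m ! * n ! * (k + n)! * (2 * m + k + n + 1)!)

noncomputable def wzCertM (m n : ℕ) : ℝ :=
  -n ^ 2 * (n + 3 * m + 3) * fallingFac (m + 1) n * ((m + n)! : ℝ) ^ 2 /
    ((m + 1)! * (n ! : ℝ) ^ 2 * (2 * m + n + 2)!)

lemma wzCertK_zero (m k : ℕ) : wzCertK m k 0 = 0 := by simp [wzCertK]

lemma wzCertK_of_lt {m k N : ℕ} (h : m < N) : wzCertK m k N = 0 := by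
  simp [wzCertK, fallingFac_natCast_eq_zero_of_lt h]

lemma wzCertM_zero (m : ℕ) : wzCertM m 0 = 0 := by simp [wzCertM]

lemma wzCertM_of_lt {m N : ℕ} (h : m + 1 < N) : wzCertM m N = 0 := by
  rw [wzCertM, ← Nat.cast_add_one, fallingFac_natCast_eq_zero_of_lt h]
  simp

lemma wzTerm_succ_k (m k n : ℕ) :
    (m + k + 1 : ℝ) * wzTerm m (k + 1) n =
      wzTerm m k n + (wzCertK m k (n + 1) - wzCertK m k n) := by
  simp only [wzTerm, wzCertK, fallingFac_succ, add_succ, succ_add, factorial_succ]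
  push_cast
  field_simp
  ring

lemma wzTerm_succ_m (m n : ℕ) :
    (m + 1 : ℝ) * wzTerm (m + 1) 0 n = wzTerm m 0 n + (wzCertM m (n + 1) - wzCertM m n) := by
  cases n with
  | zero =>
    simp only [wzTerm, wzCertM, fallingFac_zero, fallingFac_succ, add_succ, succ_add,
      factorial_succ, mul_succ]
    push_cast
    field_simp
    ring_nf
  | succ n =>
    simp only [wzTerm, wzCertM, Nat.cast_add_one, fallingFac_add_one_succ]
    simp only [fallingFac_succ, add_succ, succ_add, factorial_succ, mul_succ]
    push_cast
    field_simp
    ring_nf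

theorem sum_wzTerm_zero {m N : ℕ} (hN : m < N) : ∑ n ∈ range N, wzTerm m 0 n = (m ! : ℝ)⁻¹ := by
  induction m generalizing N with
  | zero =>
    rw [sum_eq_single_of_mem 0 (mem_range.mpr hN)]
    · simp [wzTerm, fallingFac_zero]
    · intro n _ hn
      rw [wzTerm, fallingFac_natCast_eq_zero_of_lt (pos_of_ne_zero hn)]
      simp
  | succ m ih =>
    apply eq_inv_factorial_succ_of_mul_eq
    rw [← ih (by omega : m < N)]
    exact mul_sum_range_eq_of_telescoping (wzTerm_succ_m m) (wzCertM_zero m) (wzCertM_of_lt hN)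

theorem sum_wzTerm {m N : ℕ} (k : ℕ) (hN : m < N) :
    ∑ n ∈ range N, wzTerm m k n = ((m + k)! : ℝ)⁻¹ := by
  induction k with
  | zero => exact sum_wzTerm_zero hN
  | succ k ih =>
    rw [← add_assoc]
    apply eq_inv_factorial_succ_of_mul_eq
    rw [← ih, Nat.cast_add]
    exact mul_sum_range_eq_of_telescoping (wzTerm_succ_k m k) (wzCertK_zero m k) (wzCertK_of_lt hN)

lemma risingFac_natCast_add_one (c n : ℕ) : risingFac (c + 1) n = ((c + n)! / c ! : ℝ) := by
  rw [← factorial_mul_risingFac, mul_div_cancel_left₀ _ (by positivity)]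

lemma summand_eq_mul_wzTerm (m k n : ℕ) :
    risingFac ((m : ℝ) + 1) n * fallingFac (m : ℝ) n * risingFac ((m : ℝ) + 1) (k + n)
        * ((k : ℝ) + m + 2 * n + 1) /
      ((n ! : ℝ) * ((k + n)! : ℝ) * risingFac (2 * (m : ℝ) + 2) (k + n)) =
    ((2 * m + 1)! / m ! : ℝ) * wzTerm m k n := by
  have h2m : 2 * (m : ℝ) + 2 = ((2 * m + 1 : ℕ) : ℝ) + 1 := by push_cast; ring
  rw [h2m, risingFac_natCast_add_one, risingFac_natCast_add_one, risingFac_natCast_add_one, wzTerm,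
    ← add_assoc m k n, show 2 * m + 1 + (k + n) = 2 * m + k + n + 1 by omega]
  field_simp

lemma two_pow_mul_Gamma_nat_add_three_halves (m : ℕ) :
    2 ^ (2 * m + 1) * Real.Gamma (m + 3 / 2) = (2 * m + 1)! / m ! * Real.sqrt Real.pi := by
  have hfac : ((2 * m + 1)! : ℝ) = (2 * m + 1)‼ * 2 ^ m * m ! := by
    rw [factorial_eq_mul_doubleFactorial, doubleFactorial_two_mul]
    push_cast
    ring
  rw [show (m : ℝ) + 3 / 2 = m + 1 + 1 / 2 by ring, Real.Gamma_nat_add_one_add_half, hfac]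
  field_simp
  ring

theorem finite_sum_gamma_identity (m k : ℕ) :
    ∑ n ∈ Finset.range (m + 1),
      risingFac ((m : ℝ) + 1) n * fallingFac (m : ℝ) n * risingFac ((m : ℝ) + 1) (k + n)
          * ((k : ℝ) + m + 2 * n + 1) /
        ((n.factorial : ℝ) * ((k + n).factorial : ℝ) * risingFac (2 * (m : ℝ) + 2) (k + n)) =
      2 ^ (2 * m + 1) * Real.Gamma ((m : ℝ) + 3 / 2) /
        (Real.sqrt Real.pi * ((m + k).factorial : ℝ)) := by
  rw [sum_congr rfl fun n _ ↦ summand_eq_mul_wzTerm m k n, ← mul_sum, sum_wzTerm k (lt_add_one m),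
    two_pow_mul_Gamma_nat_add_three_halves]
  field_simp
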